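/- For every κ ∈ (0,1] and every fixed real z, the partial derivative of e_κ(z) with respect to κ equals e_κ(z) · H(κz)/κ², where H(u) = −ln(u + √(u² + 1)) + u/√(u² + 1). -/

import Mathlib

noncomputable def ekappa (κ z : ℝ) : ℝ :=
  (κ * z + Real.sqrt (κ ^ 2 * z ^ 2 + 1)) ^ (1 / κ)

noncomputable def Hfun (u : ℝ) : ℝ :=
  -Real.log (u + Real.sqrt (u ^ 2 + 1)) + u / Real.sqrt (u ^ 2 + 1)

/-
Since `u + √(u² + 1) = exp (arsinh u)`, we have `e_κ(z) = exp (arsinh (κz) / κ)` and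
`H(u) = u · arsinh' u - arsinh u`; the derivative of `κ ↦ arsinh (κz) / κ` is then exactly
`H(κz) / κ²` by the quotient rule, and the chain rule for `exp` finishes.
-/

open Real

lemma ekappa_eq_exp_arsinh_div (κ z : ℝ) : ekappa κ z = exp (arsinh (κ * z) / κ) := by
  have hsq : κ ^ 2 * z ^ 2 + 1 = 1 + (κ * z) ^ 2 := by ring
  rw [ekappa, hsq, ← exp_arsinh, ← exp_mul, one_div, div_eq_mul_inv]

lemma Hfun_eq_mul_inv_sqrt_sub_arsinh (u : ℝ) : Hfun u = u * (√(1 + u ^ 2))⁻¹ - arsinh u := by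
  rw [Hfun, arsinh, add_comm (u ^ 2)]
  ring

lemma hasDerivAt_arsinh_mul_div_self (z : ℝ) {κ : ℝ} (hκ : κ ≠ 0) :
    HasDerivAt (fun k => arsinh (k * z) / k) (Hfun (κ * z) / κ ^ 2) κ := by
  refine ((hasDerivAt_mul_const z).arsinh.div (hasDerivAt_id κ) hκ).congr_deriv ?_
  rw [Hfun_eq_mul_inv_sqrt_sub_arsinh, id, smul_eq_mul]
  ring

theorem ekappa_hasDerivAt_kappa :
    ∀ κ ∈ Set.Ioc (0 : ℝ) 1, ∀ z : ℝ,
      HasDerivAt (fun k : ℝ => ekappa k z)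
        (ekappa κ z * Hfun (κ * z) / κ ^ 2) κ := by
  intro κ hκ z
  simp_rw [ekappa_eq_exp_arsinh_div]
  rw [mul_div_assoc]
  exact (hasDerivAt_arsinh_mul_div_self z hκ.1.ne').exp
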